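/- If two annotation-free extended Plebeia nodes n₁ and n₂ both satisfy the shape invariants (SI1), (SI2), and (SI6) at every subtree and modelize_node_aux(n₁) = modelize_node_aux(n₂), then n₁ = n₂; i.e., the shape invariants force a canonical tree representation of each nested key–value store. -/

import Mathlib

/-- A side is `L` or `R`. -/
inductive Side : Type
  | L | R
deriving DecidableEq, Repr

/-- A key is a list of sides. -/
abbrev Key := List Side

/-- The strict order `L < R` on sides. -/
def Side.lt : Side → Side → Prop := fun a b => a = Side.L ∧ b = Side.R

/-- The strict lexicographic order on keys induced by `L < R`. -/
def keyLt : Key → Key → Prop := List.Lex Side.lt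

/-- A list of keys is prefix-free: for any two distinct keys in it,
neither is a prefix of the other. -/
def PrefixFreeList (ks : List Key) : Prop :=
  List.Pairwise (fun a b => ¬ a <+: b ∧ ¬ b <+: a) ks

/-- A set of keys is prefix-free. -/
def PrefixFreeSet (S : Set Key) : Prop :=
  ∀ a ∈ S, ∀ b ∈ S, a ≠ b → ¬ a <+: b

/-- A list of keys is strictly increasing in the lexicographic order. -/
def SortedKeys (ks : List Key) : Prop := List.Pairwise keyLt ks

/-- Key list of an association list is prefix-free and strictly increasing. -/
def GoodKeyList (ks : List Key) : Prop := PrefixFreeList ks ∧ SortedKeys ks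

/-- Prepend the key `s` to the key of every entry. -/
def prependAll {β : Type _} (s : Key) (l : List (Key × β)) : List (Key × β) :=
  l.map (fun e => (s ++ e.1, e.2))

/-- `lookup l k` is `some` of the value of the first entry of `l` with key `k`. -/
def lookupA {β : Type _} (l : List (Key × β)) (k : Key) : Option β :=
  (l.find? (fun e => decide (e.1 = k))).map Prod.snd
/-- Annotation-free extended Plebeia nodes over a value type `α`. -/
inductive ANode (α : Type) : Type
  | leaf : α → ANode α
  | branch : ANode α → ANode α → ANode α
  | extender : Key → ANode α → ANode α
  | bud : Option (ANode α) → ANode α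

variable {α : Type}

def ANode.isExtender : ANode α → Prop
  | .extender _ _ => True
  | _ => False

def ANode.isBud : ANode α → Prop
  | .bud _ => True
  | _ => False

def ANode.isLeaf : ANode α → Prop
  | .leaf _ => True
  | _ => False

/-- Shape invariants (SI1), (SI2), (SI6) at every subtree. -/
def ANode.shapeInv : ANode α → Prop
  | .leaf _ => True
  | .branch l r => l.shapeInv ∧ r.shapeInv
  | .extender s n => (¬ n.isExtender) ∧ s ≠ [] ∧ n.shapeInv
  | .bud none => True
  | .bud (some n) => (¬ n.isBud) ∧ (¬ n.isLeaf) ∧ n.shapeInv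

/-- Nested values: either a value or a nested key--value store (association list). -/
inductive NestedValue (α : Type) : Type
  | value : α → NestedValue α
  | map : List (Key × NestedValue α) → NestedValue α

/-- `modelize_node_aux` for annotation-free nodes. -/
def modelizeNodeAux : ANode α → List (Key × NestedValue α)
  | .leaf v => [([], .value v)]
  | .branch l r =>
      prependAll [Side.L] (modelizeNodeAux l) ++ prependAll [Side.R] (modelizeNodeAux r)
  | .extender s n => prependAll s (modelizeNodeAux n)
  | .bud none => [([], .map [])]
  | .bud (some n) => [([], .map (modelizeNodeAux n))]

/-!
The model determines the root of a node. Leaves and buds produce a single entry at the empty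
key, told apart by its value; branches and extenders (whose key is non-empty by SI2) produce
only non-empty keys. A branch has keys beginning with `L` and keys beginning with `R`, while
every key in the model of `Extender(s, n)` begins with `s`. By SI1 the child `n` is not an
extender, so the keys of its model have no common non-empty prefix, and `s` is recovered as
the longest common prefix of the keys. Equal models therefore have equal roots, and stripping
the first side (for a branch) or `s` (for an extender) gives equal models of the children, so
induction finishes the proof.
-/

section PrependAll

variable {β : Type*}

theorem prependAll_injective (s : Key) : Function.Injective (prependAll (β := β) s) :=
  List.map_injective_iff.2 fun _ _ h => by
    simp only [Prod.mk.injEq, List.append_cancel_left_eq] at h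
    exact Prod.ext h.1 h.2

theorem prefix_of_mem_prependAll {s : Key} {l : List (Key × β)} {e : Key × β}
    (he : e ∈ prependAll s l) : s <+: e.1 := by
  obtain ⟨e', -, rfl⟩ := List.mem_map.1 he
  exact List.prefix_append _ _

theorem prependAll_L_append_prependAll_R_inj {a b a' b' : List (Key × β)}
    (h : prependAll [.L] a ++ prependAll [.R] b = prependAll [.L] a' ++ prependAll [.R] b') :
    a = a' ∧ b = b' := by
  let startsWithL : Key × β → Bool := fun e => e.1.head? == some .L
  have filter_L (l : List (Key × β)) :
      (prependAll [.L] l).filter startsWithL = prependAll [.L] l :=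
    List.filter_eq_self.2 fun _ he => by obtain ⟨_, -, rfl⟩ := List.mem_map.1 he; rfl
  have filter_R (l : List (Key × β)) : (prependAll [.R] l).filter startsWithL = [] :=
    List.filter_eq_nil_iff.2 fun _ he => by obtain ⟨_, -, rfl⟩ := List.mem_map.1 he; nofun
  have hL : prependAll [.L] a = prependAll [.L] a' := by
    simpa [List.filter_append, filter_L, filter_R] using congrArg (List.filter startsWithL) h
  rw [hL] at h
  exact ⟨prependAll_injective _ hL, prependAll_injective _ (List.append_cancel_left h)⟩

theorem prefix_of_forall_prefix_prependAll {s t : Key} {l : List (Key × β)} (hl : l ≠ [])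
    (hlcp : ∀ u : Key, (∀ e ∈ l, u <+: e.1) → u = [])
    (ht : ∀ e ∈ prependAll s l, t <+: e.1) : t <+: s := by
  obtain ⟨e, he⟩ := List.exists_mem_of_ne_nil l hl
  rcases List.prefix_or_prefix_of_prefix (ht _ (List.mem_map_of_mem he))
    (List.prefix_append s e.1) with hts | ⟨u, rfl⟩
  · exact hts
  · obtain rfl : u = [] := hlcp u fun e he =>
      (List.prefix_append_right_inj s).1 (ht _ (List.mem_map_of_mem he))
    simp

end PrependAll

theorem modelizeNodeAux_ne_nil : ∀ n : ANode α, modelizeNodeAux n ≠ []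
  | .leaf _ | .bud none | .bud (some _) => List.cons_ne_nil _ _
  | .branch l _ => by simp [modelizeNodeAux, prependAll, modelizeNodeAux_ne_nil l]
  | .extender _ n => by simp [modelizeNodeAux, prependAll, modelizeNodeAux_ne_nil n]

theorem exists_mem_modelizeNodeAux_branch (l r : ANode α) (c : Side) :
    ∃ e ∈ modelizeNodeAux (.branch l r), ∃ k, e.1 = c :: k := by
  cases c
  · obtain ⟨e, he⟩ := List.exists_mem_of_ne_nil _ (modelizeNodeAux_ne_nil l)
    exact ⟨_, List.mem_append_left _ (List.mem_map_of_mem he), e.1, rfl⟩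
  · obtain ⟨e, he⟩ := List.exists_mem_of_ne_nil _ (modelizeNodeAux_ne_nil r)
    exact ⟨_, List.mem_append_right _ (List.mem_map_of_mem he), e.1, rfl⟩

theorem eq_nil_of_forall_prefix_modelizeNodeAux {n : ANode α} (hn : ¬ n.isExtender) {u : Key}
    (hu : ∀ e ∈ modelizeNodeAux n, u <+: e.1) : u = [] := by
  rcases n with _ | ⟨l, r⟩ | _ | _ | _
  case branch =>
    cases u with
    | nil => rfl
    | cons c u =>
      obtain ⟨eL, heL, kL, hkL⟩ := exists_mem_modelizeNodeAux_branch l r .L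
      obtain ⟨eR, heR, kR, hkR⟩ := exists_mem_modelizeNodeAux_branch l r .R
      have hcL := (List.cons_prefix_cons.1 (hkL ▸ hu _ heL)).1
      have hcR := (List.cons_prefix_cons.1 (hkR ▸ hu _ heR)).1
      cases hcL.symm.trans hcR
  case extender => exact absurd trivial hn
  all_goals exact List.prefix_nil.1 (hu _ (List.mem_singleton_self _))

theorem prependAll_modelizeNodeAux_inj {s₁ s₂ : Key} {n₁ n₂ : ANode α}
    (hn₁ : ¬ n₁.isExtender) (hn₂ : ¬ n₂.isExtender)
    (hm : prependAll s₁ (modelizeNodeAux n₁) = prependAll s₂ (modelizeNodeAux n₂)) :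
    s₁ = s₂ ∧ modelizeNodeAux n₁ = modelizeNodeAux n₂ := by
  have prefix_of_eq {s s' : Key} {n n' : ANode α} (hn : ¬ n.isExtender)
      (hm : prependAll s (modelizeNodeAux n) = prependAll s' (modelizeNodeAux n')) : s' <+: s :=
    prefix_of_forall_prefix_prependAll (modelizeNodeAux_ne_nil n)
      (fun _ => eq_nil_of_forall_prefix_modelizeNodeAux hn)
      (hm ▸ fun _ => prefix_of_mem_prependAll)
  obtain rfl : s₁ = s₂ := antisymm (prefix_of_eq hn₂ hm.symm) (prefix_of_eq hn₁ hm)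
  exact ⟨rfl, prependAll_injective s₁ hm⟩

theorem modelizeNodeAux_branch_ne_singleton_nil (l r : ANode α) (x : NestedValue α) :
    modelizeNodeAux (.branch l r) ≠ [([], x)] := by
  intro h
  obtain ⟨e, he, k, hk⟩ := exists_mem_modelizeNodeAux_branch l r .L
  rw [h, List.mem_singleton] at he
  simp [he] at hk

theorem modelizeNodeAux_extender_ne_singleton_nil {s : Key} (hs : s ≠ []) (n : ANode α)
    (x : NestedValue α) : modelizeNodeAux (.extender s n) ≠ [([], x)] := by
  intro h
  obtain ⟨e, he⟩ := List.exists_mem_of_ne_nil _ (modelizeNodeAux_ne_nil (.extender s n))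
  have hse : s <+: e.1 := prefix_of_mem_prependAll he
  rw [h, List.mem_singleton] at he
  subst he
  exact hs (List.prefix_nil.1 hse)

theorem modelizeNodeAux_branch_ne_extender (l r : ANode α) {s : Key} (hs : s ≠ [])
    (n : ANode α) : modelizeNodeAux (.branch l r) ≠ modelizeNodeAux (.extender s n) := fun h =>
  hs (eq_nil_of_forall_prefix_modelizeNodeAux (n := .branch l r) id
    fun _ he => prefix_of_mem_prependAll (h ▸ he))

/-- if two annotation-free extended Plebeia nodes both satisfy the
shape invariants (SI1), (SI2), (SI6) at every subtree and have the same
`modelize_node_aux`, then they are equal. -/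
theorem stmt14 {α : Type} (n₁ n₂ : ANode α)
    (h₁ : n₁.shapeInv) (h₂ : n₂.shapeInv)
    (hm : modelizeNodeAux n₁ = modelizeNodeAux n₂) : n₁ = n₂ :=
  match n₁, n₂, h₁, h₂, hm with
  | .leaf _, .leaf _, _, _, hm => by simpa [modelizeNodeAux] using hm
  | .bud none, .bud none, _, _, _ => rfl
  | .bud (some n₁), .bud (some n₂), ⟨_, _, h₁⟩, ⟨_, _, h₂⟩, hm => by
    rw [stmt14 n₁ n₂ h₁ h₂ (by simpa [modelizeNodeAux] using hm)]
  | .branch l₁ r₁, .branch l₂ r₂, ⟨hl₁, hr₁⟩, ⟨hl₂, hr₂⟩, hm => by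
    obtain ⟨hl, hr⟩ := prependAll_L_append_prependAll_R_inj hm
    rw [stmt14 l₁ l₂ hl₁ hl₂ hl, stmt14 r₁ r₂ hr₁ hr₂ hr]
  | .extender _ n₁, .extender _ n₂, ⟨hn₁, _, h₁⟩, ⟨hn₂, _, h₂⟩, hm => by
    obtain ⟨rfl, hn⟩ := prependAll_modelizeNodeAux_inj hn₁ hn₂ hm
    rw [stmt14 n₁ n₂ h₁ h₂ hn]
  | .leaf _, .bud none, _, _, hm | .leaf _, .bud (some _), _, _, hm
  | .bud none, .leaf _, _, _, hm | .bud (some _), .leaf _, _, _, hm => by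
    simp [modelizeNodeAux] at hm
  | .bud none, .bud (some n), _, _, hm | .bud (some n), .bud none, _, _, hm => by
    simp [modelizeNodeAux, modelizeNodeAux_ne_nil n] at hm
  | .branch .., .leaf _, _, _, hm | .branch .., .bud none, _, _, hm
  | .branch .., .bud (some _), _, _, hm =>
    absurd hm (modelizeNodeAux_branch_ne_singleton_nil _ _ _)
  | .leaf _, .branch .., _, _, hm | .bud none, .branch .., _, _, hm
  | .bud (some _), .branch .., _, _, hm =>
    absurd hm.symm (modelizeNodeAux_branch_ne_singleton_nil _ _ _)
  | .extender .., .leaf _, ⟨_, hs, _⟩, _, hm | .extender .., .bud none, ⟨_, hs, _⟩, _, hm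
  | .extender .., .bud (some _), ⟨_, hs, _⟩, _, hm =>
    absurd hm (modelizeNodeAux_extender_ne_singleton_nil hs _ _)
  | .leaf _, .extender .., _, ⟨_, hs, _⟩, hm | .bud none, .extender .., _, ⟨_, hs, _⟩, hm
  | .bud (some _), .extender .., _, ⟨_, hs, _⟩, hm =>
    absurd hm.symm (modelizeNodeAux_extender_ne_singleton_nil hs _ _)
  | .branch .., .extender .., _, ⟨_, hs, _⟩, hm =>
    absurd hm (modelizeNodeAux_branch_ne_extender _ _ hs _)
  | .extender .., .branch .., ⟨_, hs, _⟩, _, hm =>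
    absurd hm.symm (modelizeNodeAux_branch_ne_extender _ _ hs _)
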